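/- arXiv:2509.01651 — 3 statements merged into one kernel-verified Lean document; each statement's English description precedes it below -/
import Mathlib

section
/- Let A be a symmetric n×n real matrix, a ∈ ℝⁿ, Δ > 0, and let x* be a global minimizer of q(x) = xᵀAx − 2aᵀx subject to ‖x‖² ≤ Δ². If ‖x*‖ = Δ and λ* is the Lagrange multiplier satisfying (A − λ*I)x* = a with λ* ≤ 0, then the matrix A − λ*I is positive semidefinite. -/
open Matrix

theorem trs_global_min_boundary_psd {n : ℕ} (A : Matrix (Fin n) (Fin n) ℝ)
    (a xstar : Fin n → ℝ) (Δ lam : ℝ) (hA : A.IsSymm) (hΔ : 0 < Δ)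
    (hmin : ∀ x : Fin n → ℝ, x ⬝ᵥ x ≤ Δ ^ 2 →
      xstar ⬝ᵥ A.mulVec xstar - 2 * (a ⬝ᵥ xstar) ≤ x ⬝ᵥ A.mulVec x - 2 * (a ⬝ᵥ x))
    (hfeas : xstar ⬝ᵥ xstar = Δ ^ 2)
    (hstat : (A - lam • (1 : Matrix (Fin n) (Fin n) ℝ)).mulVec xstar = a)
    (hlam : lam ≤ 0) :
    ∀ y : Fin n → ℝ, 0 ≤ y ⬝ᵥ (A - lam • (1 : Matrix (Fin n) (Fin n) ℝ)).mulVec y := by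
  set B := A - lam • (1 : Matrix (Fin n) (Fin n) ℝ) with hB
  have hBmv : ∀ v : Fin n → ℝ, B.mulVec v = A.mulVec v - lam • v := by
    intro v
    simp [hB, Matrix.sub_mulVec, Matrix.smul_mulVec, Matrix.one_mulVec]
  have hsymA : ∀ u v : Fin n → ℝ, u ⬝ᵥ A.mulVec v = v ⬝ᵥ A.mulVec u := by
    intro u v
    rw [Matrix.dotProduct_mulVec, ← Matrix.mulVec_transpose, hA, dotProduct_comm]
  have hsymB : ∀ u v : Fin n → ℝ, u ⬝ᵥ B.mulVec v = v ⬝ᵥ B.mulVec u := by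
    intro u v
    simp only [hBmv, dotProduct_sub, dotProduct_smul, hsymA u v, smul_eq_mul,
      dotProduct_comm u v]
  have hdself : ∀ v : Fin n → ℝ, 0 ≤ v ⬝ᵥ v := by
    intro v
    exact Finset.sum_nonneg fun i _ => mul_self_nonneg (v i)
  -- on the sphere: (x - x*)ᵀ B (x - x*) ≥ 0
  have key : ∀ x : Fin n → ℝ, x ⬝ᵥ x = Δ ^ 2 →
      0 ≤ (x - xstar) ⬝ᵥ B.mulVec (x - xstar) := by
    intro x hx
    have h1 : xstar ⬝ᵥ B.mulVec x = a ⬝ᵥ x := by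
      rw [hsymB, hstat, dotProduct_comm]
    have e1 : x ⬝ᵥ B.mulVec x = x ⬝ᵥ A.mulVec x - lam * Δ ^ 2 := by
      simp [hBmv, dotProduct_sub, dotProduct_smul, smul_eq_mul, hx]
    have e2 : xstar ⬝ᵥ a = xstar ⬝ᵥ A.mulVec xstar - lam * Δ ^ 2 := by
      rw [← hstat]
      simp [hBmv, dotProduct_sub, dotProduct_smul, smul_eq_mul, hfeas]
    have e3 : x ⬝ᵥ a = a ⬝ᵥ x := dotProduct_comm x a
    have hquad : (x - xstar) ⬝ᵥ B.mulVec (x - xstar)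
        = (x ⬝ᵥ A.mulVec x - 2 * (a ⬝ᵥ x))
          - (xstar ⬝ᵥ A.mulVec xstar - 2 * (a ⬝ᵥ xstar)) := by
      rw [Matrix.mulVec_sub, hstat, sub_dotProduct, dotProduct_sub, dotProduct_sub,
        h1, e1, e3]
      have e4 : a ⬝ᵥ xstar = xstar ⬝ᵥ a := dotProduct_comm a xstar
      rw [e4, e2]; ring
    have hm := hmin x hx.le
    rw [hquad]; linarith
  -- x*ᵀBx* ≥ 0 (reflection)
  have hc2 : 0 ≤ xstar ⬝ᵥ B.mulVec xstar := by
    have h := key (-xstar) (by simpa using hfeas)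
    have heq : (-xstar - xstar) ⬝ᵥ B.mulVec (-xstar - xstar)
        = 4 * (xstar ⬝ᵥ B.mulVec xstar) := by
      have h2 : -xstar - xstar = (-2 : ℝ) • xstar := by
        funext i; simp [Pi.smul_apply]; ring
      rw [h2, Matrix.mulVec_smul, smul_dotProduct, dotProduct_smul]
      simp only [smul_eq_mul]; ring
    rw [heq] at h; linarith
  -- scaling case: if x*·y ≠ 0 then yᵀBy ≥ 0
  have case1 : ∀ y : Fin n → ℝ, xstar ⬝ᵥ y ≠ 0 → 0 ≤ y ⬝ᵥ B.mulVec y := by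
    intro y hxy
    have hy0 : y ⬝ᵥ y ≠ 0 := by
      intro h
      have : y = 0 := dotProduct_self_eq_zero.mp h
      rw [this] at hxy; simp at hxy
    set s : ℝ := xstar ⬝ᵥ y / (y ⬝ᵥ y) with hs
    have hsne : s ≠ 0 := div_ne_zero hxy hy0
    set x : Fin n → ℝ := xstar - (2 * s) • y with hx
    have hxx : x ⬝ᵥ x = xstar ⬝ᵥ xstar - 4 * s * (xstar ⬝ᵥ y)
        + 4 * s ^ 2 * (y ⬝ᵥ y) := by
      rw [hx, sub_dotProduct, dotProduct_sub, dotProduct_sub, smul_dotProduct,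
        dotProduct_smul, smul_dotProduct, dotProduct_smul, dotProduct_comm y xstar]
      simp only [smul_eq_mul]; ring
    have hsy : s * (y ⬝ᵥ y) = xstar ⬝ᵥ y := by
      rw [hs]; field_simp
    have hxsphere : x ⬝ᵥ x = Δ ^ 2 := by
      rw [hxx, hfeas]; linear_combination (4 * s) * hsy
    have h := key x hxsphere
    have hxd : x - xstar = (-(2 * s)) • y := by
      rw [hx, sub_sub_cancel_left, ← neg_smul]
    rw [hxd, Matrix.mulVec_smul, smul_dotProduct, dotProduct_smul] at h
    simp only [smul_eq_mul] at h
    have hs2 : 0 < s ^ 2 := by positivity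
    nlinarith [h, hs2]
  -- general case
  intro y
  by_cases hxy : xstar ⬝ᵥ y ≠ 0
  · exact case1 y hxy
  push_neg at hxy
  have hpert : ∀ ε : ℝ, ε ≠ 0 →
      0 ≤ y ⬝ᵥ B.mulVec y + 2 * ε * (y ⬝ᵥ B.mulVec xstar)
        + ε ^ 2 * (xstar ⬝ᵥ B.mulVec xstar) := by
    intro ε hε
    have hne : xstar ⬝ᵥ (y + ε • xstar) ≠ 0 := by
      rw [dotProduct_add, dotProduct_smul, hxy, hfeas]
      simp only [smul_eq_mul, zero_add]
      positivity
    have h := case1 (y + ε • xstar) hne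
    have hexp : (y + ε • xstar) ⬝ᵥ B.mulVec (y + ε • xstar)
        = y ⬝ᵥ B.mulVec y + 2 * ε * (y ⬝ᵥ B.mulVec xstar)
          + ε ^ 2 * (xstar ⬝ᵥ B.mulVec xstar) := by
      simp only [Matrix.mulVec_add, Matrix.mulVec_smul, add_dotProduct,
        dotProduct_add, smul_dotProduct, dotProduct_smul, smul_eq_mul,
        hsymB xstar y]
      ring
    rw [hexp] at h; exact h
  set c0 := y ⬝ᵥ B.mulVec y with hc0
  set c2 := xstar ⬝ᵥ B.mulVec xstar with hc2def
  by_contra hc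
  push_neg at hc
  have hpos : (0:ℝ) < -c0 / (2 * (c2 + 1)) :=
    div_pos (by linarith) (by linarith)
  have hε : (0:ℝ) < Real.sqrt (-c0 / (2 * (c2 + 1))) := Real.sqrt_pos.mpr hpos
  set ε := Real.sqrt (-c0 / (2 * (c2 + 1))) with hεdef
  have hε2 : ε ^ 2 = -c0 / (2 * (c2 + 1)) := Real.sq_sqrt hpos.le
  have hε2' : ε ^ 2 * (2 * (c2 + 1)) = -c0 := by
    rw [hε2]; field_simp
  have h1 := hpert ε hε.ne'
  have h2 := hpert (-ε) (neg_ne_zero.mpr hε.ne')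
  nlinarith [h1, h2, hε2', hc, sq_nonneg ε]
end

section
/- Let A be a symmetric n×n real matrix, a ∈ ℝⁿ, λ* ∈ ℝ with λ* ≤ 0, and x* ∈ ℝⁿ with ‖x*‖ ≤ Δ. If (A − λ*I)x* = a, λ*(‖x*‖² − Δ²) = 0, and A − λ*I is positive semidefinite, then x* is a global minimizer of q(x) = xᵀAx − 2aᵀx over the ball ‖x‖ ≤ Δ. -/
open Matrix

theorem trs_kkt_psd_implies_global_min {n : ℕ} (A : Matrix (Fin n) (Fin n) ℝ)
    (a xstar : Fin n → ℝ) (Δ lam : ℝ) (hA : A.IsSymm) (hΔ : 0 < Δ)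
    (hlam : lam ≤ 0) (hfeas : xstar ⬝ᵥ xstar ≤ Δ ^ 2)
    (hstat : (A - lam • (1 : Matrix (Fin n) (Fin n) ℝ)).mulVec xstar = a)
    (hcomp : lam * (xstar ⬝ᵥ xstar - Δ ^ 2) = 0)
    (hpsd : ∀ y : Fin n → ℝ, 0 ≤ y ⬝ᵥ (A - lam • (1 : Matrix (Fin n) (Fin n) ℝ)).mulVec y) :
    ∀ x : Fin n → ℝ, x ⬝ᵥ x ≤ Δ ^ 2 →
      xstar ⬝ᵥ A.mulVec xstar - 2 * (a ⬝ᵥ xstar) ≤ x ⬝ᵥ A.mulVec x - 2 * (a ⬝ᵥ x) := by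
  intro x hx
  set B : Matrix (Fin n) (Fin n) ℝ := A - lam • (1 : Matrix (Fin n) (Fin n) ℝ) with hB
  have hBsymm : B.IsSymm := by
    simp [Matrix.IsSymm, hB, Matrix.transpose_sub, hA.eq]
  -- symmetry of bilinear form
  have hsym : ∀ v w : Fin n → ℝ, v ⬝ᵥ B.mulVec w = B.mulVec v ⬝ᵥ w := by
    intro v w
    rw [Matrix.dotProduct_mulVec, ← Matrix.vecMul_transpose, hBsymm.eq]
  -- expand B
  have hBv : ∀ v : Fin n → ℝ, v ⬝ᵥ B.mulVec v = v ⬝ᵥ A.mulVec v - lam * (v ⬝ᵥ v) := by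
    intro v
    simp [hB, Matrix.sub_mulVec, dotProduct_sub, Matrix.smul_mulVec,
      Matrix.one_mulVec, dotProduct_smul, smul_eq_mul]
  have h1 := hpsd (x - xstar)
  have hexp : (x - xstar) ⬝ᵥ B.mulVec (x - xstar)
      = x ⬝ᵥ B.mulVec x - 2 * (a ⬝ᵥ x) + (a ⬝ᵥ xstar) := by
    have h2 : x ⬝ᵥ B.mulVec xstar = a ⬝ᵥ x := by
      rw [hstat, dotProduct_comm]
    have h3 : xstar ⬝ᵥ B.mulVec x = a ⬝ᵥ x := by
      rw [hsym, hstat]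
    have h4 : xstar ⬝ᵥ B.mulVec xstar = a ⬝ᵥ xstar := by
      rw [hstat, dotProduct_comm]
    rw [Matrix.mulVec_sub, sub_dotProduct, dotProduct_sub,
      dotProduct_sub, h2, h3, h4]
    ring
  rw [hexp, hBv] at h1
  have h5 : xstar ⬝ᵥ B.mulVec xstar = a ⬝ᵥ xstar := by
    rw [hstat, dotProduct_comm]
  rw [hBv] at h5
  nlinarith [mul_nonneg (neg_nonneg.mpr hlam) (sub_nonneg.mpr hx)]
end

section
/- Consider an infinite sequence of filter entries (f_k, θ_k) where each new entry is acceptable to all previous ones in the sense: for all j < k, θ_k ≤ (1 − γ_θ)θ_j or f_k ≤ f_j − γ_f θ_j, with γ_θ, γ_f ∈ (0,1). If the sequence (f_k) is bounded below and (θ_k) is bounded above, then θ_k → 0. -/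
theorem filter_infeasibility_tendsto_zero (f θ : ℕ → ℝ) (γθ γf : ℝ)
    (hγθ : γθ ∈ Set.Ioo (0:ℝ) 1) (hγf : γf ∈ Set.Ioo (0:ℝ) 1)
    (hθ0 : ∀ k, 0 ≤ θ k)
    (hacc : ∀ j k, j < k → θ k ≤ (1 - γθ) * θ j ∨ f k ≤ f j - γf * θ j)
    (hfb : ∃ B, ∀ k, B ≤ f k) (hθb : ∃ C, ∀ k, θ k ≤ C) :
    Filter.Tendsto θ Filter.atTop (nhds 0) := by
  obtain ⟨B, hB⟩ := hfb
  obtain ⟨C, hC⟩ := hθb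
  have hC0 : 0 ≤ C := le_trans (hθ0 0) (hC 0)
  obtain ⟨hγθ0, hγθ1⟩ := hγθ
  obtain ⟨hγf0, hγf1⟩ := hγf
  have hq0 : 0 ≤ 1 - γθ := by linarith
  have hq1 : 1 - γθ < 1 := by linarith
  rw [Metric.tendsto_atTop]
  intro ε hε
  by_contra hcon
  push_neg at hcon
  -- the set of k with ε ≤ θ k is infinite
  have hinf : {k | ε ≤ θ k}.Infinite := by
    by_contra hfin
    rw [Set.not_infinite] at hfin
    obtain ⟨N, hN⟩ := hfin.bddAbove
    obtain ⟨n, hn, hdist⟩ := hcon (N + 1)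
    have : n ∉ {k | ε ≤ θ k} := fun h => by
      have := hN h; omega
    simp only [Set.mem_setOf_eq, not_le] at this
    rw [Real.dist_eq, sub_zero, abs_of_nonneg (hθ0 n)] at hdist
    linarith
  -- key induction: infinitely many k with ε ≤ θ k ≤ (1-γθ)^n * C
  have key : ∀ n : ℕ, {k | ε ≤ θ k ∧ θ k ≤ (1 - γθ) ^ n * C}.Infinite := by
    intro n
    induction n with
    | zero =>
      exact hinf.mono (fun k hk => ⟨hk, by simpa using hC k⟩)
    | succ n ih =>
      set T := {k | ε ≤ θ k ∧ θ k ≤ (1 - γθ) ^ n * C} with hT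
      have hne : (f '' T).Nonempty := (ih.nonempty).image f
      have hbdd : BddBelow (f '' T) := ⟨B, fun x ⟨k, _, hk⟩ => hk ▸ hB k⟩
      have hlt : sInf (f '' T) < sInf (f '' T) + γf * ε := by
        have : 0 < γf * ε := mul_pos hγf0 hε
        linarith
      obtain ⟨x, ⟨j, hjT, hjx⟩, hxlt⟩ := exists_lt_of_csInf_lt hne hlt
      -- all k in T with k > j satisfy the θ-branch
      have hstep : ∀ k ∈ T, j < k → θ k ≤ (1 - γθ) ^ (n + 1) * C := by
        intro k hkT hjk
        rcases hacc j k hjk with h | h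
        · calc θ k ≤ (1 - γθ) * θ j := h
            _ ≤ (1 - γθ) * ((1 - γθ) ^ n * C) :=
                mul_le_mul_of_nonneg_left hjT.2 hq0
            _ = (1 - γθ) ^ (n + 1) * C := by ring
        · exfalso
          have h1 : sInf (f '' T) ≤ f k := csInf_le hbdd ⟨k, hkT, rfl⟩
          have h2 : γf * ε ≤ γf * θ j := mul_le_mul_of_nonneg_left hjT.1 hγf0.le
          have : f k ≤ f j - γf * ε := by linarith
          rw [← hjx] at hxlt
          linarith
      have hsub : {k | k ∈ T ∧ j < k}.Infinite := by
        have : {k | k ∈ T ∧ j < k} = T \ {k | k ≤ j} := by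
          ext k; simp [Set.mem_setOf_eq, not_le, and_comm]
        rw [this]
        exact ih.diff (Set.finite_Iic j)
      exact hsub.mono (fun k hk => ⟨hk.1.1, hstep k hk.1 hk.2⟩)
  -- choose n with (1-γθ)^n * C < ε
  have htend : Filter.Tendsto (fun n : ℕ => (1 - γθ) ^ n * C) Filter.atTop (nhds 0) := by
    simpa using (tendsto_pow_atTop_nhds_zero_of_lt_one hq0 hq1).mul_const C
  obtain ⟨n, hn⟩ := (htend.eventually (gt_mem_nhds hε)).exists
  obtain ⟨k, hk1, hk2⟩ := (key n).nonempty
  linarith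
end
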